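/- Let n ≥ 2 and k ≥ 2 be integers, and let P_{n,k} be the induced subgraph of W_{n,k} obtained by deleting the k vertices w_{n,1}, …, w_{n,k} (the w-vertices with first index n, viewed in ℤ/nℤ). Then at most 3k of the eigenvalues of P_{n,k} (counted with multiplicity) lie outside the set {−1, 1} ∪ [k−1, k+1] ∪ [−k−1, −k+1]. -/

import Mathlib

open Polynomial

/-- Vertex set of `W n k`: `Sum.inl (i, j)` is the vertex `v_{i,j}` and
`Sum.inr (i, j)` is the vertex `w_{i,j}`, for `i ∈ ℤ/nℤ` and `j ∈ {1, …, k}`. -/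
abbrev WVert (n k : ℕ) : Type := (ZMod n × Fin k) ⊕ (ZMod n × Fin k)

/-- Adjacency of `W n k`: `v_{i,j} ~ w_{i',l}` iff `i' = i`, or `i = i' + 1` and `j = l`. -/
def WAdj (n k : ℕ) : WVert n k → WVert n k → Prop
  | Sum.inl p, Sum.inr q => q.1 = p.1 ∨ (p.1 = q.1 + 1 ∧ p.2 = q.2)
  | Sum.inr q, Sum.inl p => q.1 = p.1 ∨ (p.1 = q.1 + 1 ∧ p.2 = q.2)
  | Sum.inl _, Sum.inl _ => False
  | Sum.inr _, Sum.inr _ => False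

/-- The graph `W_{n,k}`: vertices `v_{i,j}` and `w_{i,j}` (`i ∈ ℤ/nℤ`, `1 ≤ j ≤ k`),
with edges `v_{i,j} w_{i,l}` for all `i, j, l`, and `w_{i,j} v_{i+1,j}` for all `i, j`. -/
def W (n k : ℕ) : SimpleGraph (WVert n k) where
  Adj := WAdj n k
  symm := ⟨by
    rintro (p | p) (q | q) h
    · exact h.elim
    · exact h
    · exact h
    · exact h.elim⟩
  loopless := ⟨by rintro (p | p) h <;> exact h⟩

instance (n k : ℕ) : DecidableRel (WAdj n k) := fun a b =>
  match a, b with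
  | Sum.inl p, Sum.inr q =>
      inferInstanceAs (Decidable (q.1 = p.1 ∨ (p.1 = q.1 + 1 ∧ p.2 = q.2)))
  | Sum.inr q, Sum.inl p =>
      inferInstanceAs (Decidable (q.1 = p.1 ∨ (p.1 = q.1 + 1 ∧ p.2 = q.2)))
  | Sum.inl _, Sum.inl _ => inferInstanceAs (Decidable False)
  | Sum.inr _, Sum.inr _ => inferInstanceAs (Decidable False)

instance (n k : ℕ) : DecidableRel (W n k).Adj :=
  inferInstanceAs (DecidableRel (WAdj n k))

/-- The vertex set of `P_{n,k}`: all vertices of `W_{n,k}` except `w_{0,1}, …, w_{0,k}`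
(the `w`-vertices whose first index is `n ≡ 0 (mod n)`). -/
def PVert (n k : ℕ) : Set (WVert n k) :=
  {x | ∀ j : Fin k, x ≠ Sum.inr ((0 : ZMod n), j)}

instance (n k : ℕ) : DecidablePred (· ∈ PVert n k) := fun x =>
  inferInstanceAs (Decidable (∀ j : Fin k, x ≠ Sum.inr ((0 : ZMod n), j)))

/-- `P_{n,k}`: the induced subgraph of `W_{n,k}` obtained by deleting the `k` vertices
`w_{0,1}, …, w_{0,k}`. -/
def P (n k : ℕ) : SimpleGraph (PVert n k) := (W n k).induce (PVert n k)

instance (n k : ℕ) : DecidableRel (P n k).Adj := fun a b =>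
  inferInstanceAs (Decidable ((W n k).Adj a.1 b.1))

/-!
The eigenvalues are counted through `‖A x‖² = ∑ᵢ λᵢ² ⟪eᵢ, x⟫²`: a subspace on which
`‖A x‖² ≥ c ‖x‖²` (resp. `≤`) has dimension at most the number of eigenvalues with `λ² ≥ c`
(resp. `≤`).

Extend `x` on `P_{n,k}` by zero to `y` on `W_{n,k}`. With `s i`, `t i` the sums of `y` over the
blocks `v_{i,·}` and `w_{i,·}`, one has `‖A_W y‖² = ‖y‖² + Q s + Q t` for the cyclic form
`Q u = k ∑ uᵢ² + 2 ∑ uᵢ uᵢ₊₁ = (k - 2) ∑ uᵢ² + ∑ (uᵢ + uᵢ₊₁)²`, and `‖A_P x‖²` is `‖A_W y‖²`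
minus the squares of `A_W y` at the `k` deleted vertices. Hence `‖A_P x‖² ≤ (k + 1)² ‖x‖²`
everywhere, `‖A_P x‖² ≥ ‖x‖²` where `A_W y` vanishes at the deleted vertices (codimension `≤ k`),
`‖A_P x‖² ≤ ‖x‖²` where all block sums vanish (codimension `≤ 2n`), and
`‖A_P x‖² ≥ (k - 1)² ‖x‖²` on the `(2n - 2)`-dimensional space of block-constant vectors
vanishing on the two blocks of index `0`. So no eigenvalue has `λ² > (k + 1)²`, at most `k` have
`λ² < 1` and at most `2` have `1 < λ² < (k - 1)²`; at most `k + 2 ≤ 3k` are exceptional.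
-/

open Matrix Finset Module

namespace Matrix.IsHermitian

variable {ι : Type*} [Fintype ι] [DecidableEq ι] {A : Matrix ι ι ℝ} (hA : A.IsHermitian)

theorem dotProduct_self_eq_sum_sq (x : ι → ℝ) :
    x ⬝ᵥ x = ∑ i, (⇑(hA.eigenvectorBasis i) ⬝ᵥ x) ^ 2 := by
  have h := hA.eigenvectorBasis.sum_inner_mul_inner (WithLp.toLp 2 x) (WithLp.toLp 2 x)
  simp only [EuclideanSpace.inner_eq_star_dotProduct, star_trivial] at h
  rw [← h]
  exact sum_congr rfl fun i _ => by rw [sq, dotProduct_comm]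

theorem eigenvectorBasis_dotProduct_mulVec (x : ι → ℝ) (i : ι) :
    ⇑(hA.eigenvectorBasis i) ⬝ᵥ (A *ᵥ x) =
      hA.eigenvalues i * (⇑(hA.eigenvectorBasis i) ⬝ᵥ x) := by
  rw [dotProduct_mulVec, ← mulVec_transpose, ← conjTranspose_eq_transpose_of_trivial, hA.eq,
    hA.mulVec_eigenvectorBasis, smul_dotProduct, smul_eq_mul]

theorem mulVec_dotProduct_mulVec_eq_sum (x : ι → ℝ) :
    (A *ᵥ x) ⬝ᵥ (A *ᵥ x) =
      ∑ i, hA.eigenvalues i ^ 2 * (⇑(hA.eigenvectorBasis i) ⬝ᵥ x) ^ 2 := by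
  simp only [hA.dotProduct_self_eq_sum_sq (A *ᵥ x), eigenvectorBasis_dotProduct_mulVec, mul_pow]

/-- The coordinates of `x ∈ K` along the eigenvectors with `0 ≤ w i` determine `x`. -/
theorem finrank_le_card_nonneg_of_sum_mul_sq_nonneg (w : ι → ℝ) (K : Submodule ℝ (ι → ℝ))
    (hK : ∀ x ∈ K, 0 ≤ ∑ i, w i * (⇑(hA.eigenvectorBasis i) ⬝ᵥ x) ^ 2) :
    finrank ℝ K ≤ #{i | 0 ≤ w i} := by
  set S : Finset ι := {i | 0 ≤ w i}
  let coords : K →ₗ[ℝ] S → ℝ :=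
    (Matrix.of fun i : S => ⇑(hA.eigenvectorBasis i)).mulVecLin ∘ₗ K.subtype
  have h_inj : Function.Injective coords := by
    rw [injective_iff_map_eq_zero]
    rintro ⟨x, hx⟩ h0
    have hS : ∀ i ∈ S, ⇑(hA.eigenvectorBasis i) ⬝ᵥ x = 0 := fun i hi => congrFun h0 ⟨i, hi⟩
    have h_nonpos : ∀ i ∈ univ, w i * (⇑(hA.eigenvectorBasis i) ⬝ᵥ x) ^ 2 ≤ 0 := by
      intro i _
      by_cases hi : i ∈ S
      · simp [hS i hi]
      · exact mul_nonpos_of_nonpos_of_nonneg (not_le.1 (by simpa [S] using hi)).le (sq_nonneg _)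
    have h_zero := (sum_eq_zero_iff_of_nonpos h_nonpos).1
      (le_antisymm (sum_nonpos h_nonpos) (hK x hx))
    have h_coord : ∀ i, ⇑(hA.eigenvectorBasis i) ⬝ᵥ x = 0 := by
      intro i
      by_cases hi : i ∈ S
      · exact hS i hi
      · have hw : w i ≠ 0 := fun h => hi (by simp [S, h])
        simpa [hw] using h_zero i (mem_univ i)
    have h_self : x ⬝ᵥ x = 0 := by simp [hA.dotProduct_self_eq_sum_sq, h_coord]
    simpa using dotProduct_self_eq_zero.1 h_self
  simpa using LinearMap.finrank_le_finrank_of_injective h_inj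

theorem finrank_le_card_le_sq_eigenvalues (c : ℝ) (K : Submodule ℝ (ι → ℝ))
    (hK : ∀ x ∈ K, c * (x ⬝ᵥ x) ≤ (A *ᵥ x) ⬝ᵥ (A *ᵥ x)) :
    finrank ℝ K ≤ #{i | c ≤ hA.eigenvalues i ^ 2} := by
  refine (hA.finrank_le_card_nonneg_of_sum_mul_sq_nonneg (fun i => hA.eigenvalues i ^ 2 - c) K
    fun x hx => ?_).trans_eq (congrArg card (filter_congr fun i _ => sub_nonneg))
  simpa [sub_mul, sum_sub_distrib, ← mul_sum, ← hA.mulVec_dotProduct_mulVec_eq_sum,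
    ← hA.dotProduct_self_eq_sum_sq] using hK x hx

theorem finrank_le_card_sq_eigenvalues_le (c : ℝ) (K : Submodule ℝ (ι → ℝ))
    (hK : ∀ x ∈ K, (A *ᵥ x) ⬝ᵥ (A *ᵥ x) ≤ c * (x ⬝ᵥ x)) :
    finrank ℝ K ≤ #{i | hA.eigenvalues i ^ 2 ≤ c} := by
  refine (hA.finrank_le_card_nonneg_of_sum_mul_sq_nonneg (fun i => c - hA.eigenvalues i ^ 2) K
    fun x hx => ?_).trans_eq (congrArg card (filter_congr fun i _ => sub_nonneg))
  simpa [sub_mul, sum_sub_distrib, ← mul_sum, ← hA.mulVec_dotProduct_mulVec_eq_sum,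
    ← hA.dotProduct_self_eq_sum_sq] using hK x hx

theorem sq_eigenvalues_le_of_forall (c : ℝ) (h : ∀ x, (A *ᵥ x) ⬝ᵥ (A *ᵥ x) ≤ c * (x ⬝ᵥ x))
    (i : ι) : hA.eigenvalues i ^ 2 ≤ c := by
  have h_card := hA.finrank_le_card_sq_eigenvalues_le c ⊤ fun x _ => h x
  rw [finrank_top, finrank_fintype_fun_eq_card, ← card_univ] at h_card
  exact card_filter_eq_iff.1 (le_antisymm (card_filter_le _ _) h_card) i (mem_univ i)

end Matrix.IsHermitian

section ExtendByZero

variable {V R : Type*} [Fintype V] [NonUnitalNonAssocSemiring R] {s : Set V}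
  [DecidablePred (· ∈ s)]

theorem Function.sum_mul_extend_zero (g : V → R) (x : s → R) :
    ∑ v, g v * Function.extend Subtype.val x 0 v = ∑ u : s, g u * x u := by
  rw [← Fintype.sum_subtype_add_sum_subtype (· ∈ s)]
  have h_out : ∀ v : {v // v ∉ s}, g v * Function.extend Subtype.val x 0 v = 0 := fun v => by
    rw [Function.extend_apply' _ _ _ fun ⟨u, hu⟩ => v.2 (hu ▸ u.2), Pi.zero_apply, mul_zero]
  simp only [h_out, sum_const_zero, add_zero, Subtype.val_injective.extend_apply]

theorem Function.extend_zero_dotProduct_self (x : s → R) :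
    Function.extend Subtype.val x 0 ⬝ᵥ Function.extend Subtype.val x 0 = x ⬝ᵥ x := by
  simp only [dotProduct, Function.sum_mul_extend_zero, Subtype.val_injective.extend_apply]

end ExtendByZero

theorem Function.extend_val_comp_val {V R : Type*} [Zero R] {s : Set V} (g : V → R)
    (hg : ∀ v ∉ s, g v = 0) : Function.extend Subtype.val (g ∘ Subtype.val : s → R) 0 = g := by
  funext v
  by_cases hv : v ∈ s
  · exact Subtype.val_injective.extend_apply _ _ ⟨v, hv⟩
  · rw [Function.extend_apply' _ _ _ fun ⟨u, hu⟩ => hv (hu ▸ u.2), hg v hv, Pi.zero_apply]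

theorem SimpleGraph.adjMatrix_induce_mulVec_apply {V R : Type*} [Fintype V] [NonAssocSemiring R]
    (G : SimpleGraph V) [DecidableRel G.Adj] (s : Set V) [DecidablePred (· ∈ s)]
    [DecidableRel (G.induce s).Adj] (x : s → R) (u : s) :
    ((G.induce s).adjMatrix R *ᵥ x) u = (G.adjMatrix R *ᵥ Function.extend Subtype.val x 0) u := by
  simp only [mulVec, dotProduct, Function.sum_mul_extend_zero, adjMatrix_apply, comap_adj,
    Function.Embedding.subtype_apply]

theorem sum_sq_const_add {ι R : Type*} [Fintype ι] [CommSemiring R] (c : R) (z : ι → R) :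
    ∑ j, (c + z j) ^ 2 = Fintype.card ι * c ^ 2 + 2 * c * ∑ j, z j + ∑ j, z j ^ 2 := by
  simp only [add_sq, sum_add_distrib, sum_const, card_univ, nsmul_eq_mul, mul_sum]

theorem card_le_add_card_Ioo_add_card_ge_le_card {α : Type*} [Fintype α] (t : α → ℝ) {a b : ℝ}
    (hab : a < b) :
    #{i | t i ≤ a} + #{i | a < t i ∧ t i < b} + #{i | b ≤ t i} ≤ Fintype.card α := by
  classical
  rw [← card_union_of_disjoint, ← card_union_of_disjoint]
  · exact card_le_univ _
  · rw [disjoint_union_left, disjoint_filter, disjoint_filter]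
    exact ⟨fun i _ h₁ h₂ => by linarith, fun i _ h₁ h₂ => by linarith [h₁.2]⟩
  · rw [disjoint_filter]
    exact fun i _ h₁ h₂ => by linarith [h₂.1]

theorem sq_lt_one_or_mem_Ioo_of_notMem {k μ : ℝ} (hk : 1 ≤ k) (hμ : μ ^ 2 ≤ (k + 1) ^ 2)
    (h : μ ∉ ({-1, 1} ∪ Set.Icc (k - 1) (k + 1) ∪ Set.Icc (-k - 1) (-k + 1) : Set ℝ)) :
    μ ^ 2 < 1 ∨ 1 < μ ^ 2 ∧ μ ^ 2 < (k - 1) ^ 2 := by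
  simp only [Set.mem_union, Set.mem_insert_iff, Set.mem_singleton_iff, Set.mem_Icc, not_or] at h
  rcases lt_trichotomy (μ ^ 2) 1 with h₁ | h₁ | h₁
  · exact Or.inl h₁
  · have h_roots : (μ + 1) * (μ - 1) = 0 := by linear_combination h₁
    rcases mul_eq_zero.1 h_roots with h₂ | h₂
    · exact absurd (by linarith) h.1.1.1
    · exact absurd (by linarith) h.1.1.2
  · refine Or.inr ⟨h₁, lt_of_not_ge fun h₂ => ?_⟩
    rcases le_total 0 μ with hμ₀ | hμ₀
    · exact h.1.2 ⟨by nlinarith, by nlinarith⟩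
    · exact h.2 ⟨by nlinarith, by nlinarith⟩

section CyclicForm

variable {n : ℕ} [NeZero n]

def cyclicForm (c : ℝ) (u : ZMod n → ℝ) : ℝ := ∑ i, (c * u i ^ 2 + 2 * (u i * u (i + 1)))

theorem cyclicForm_eq (c : ℝ) (u : ZMod n → ℝ) :
    cyclicForm c u = (c - 2) * ∑ i, u i ^ 2 + ∑ i, (u i + u (i + 1)) ^ 2 := by
  have h_shift := Equiv.sum_comp (Equiv.addRight 1) fun i => u i ^ 2
  simp only [Equiv.coe_addRight] at h_shift
  simp only [cyclicForm, add_sq, sum_add_distrib, mul_assoc, ← mul_sum, h_shift]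
  ring

theorem cyclicForm_nonneg {c : ℝ} (hc : 2 ≤ c) (u : ZMod n → ℝ) : 0 ≤ cyclicForm c u := by
  rw [cyclicForm_eq]
  exact add_nonneg (mul_nonneg (by linarith) (sum_nonneg fun i _ => sq_nonneg _))
    (sum_nonneg fun i _ => sq_nonneg _)

theorem cyclicForm_le (c : ℝ) (u : ZMod n → ℝ) : cyclicForm c u ≤ (c + 2) * ∑ i, u i ^ 2 := by
  have h_diff : 0 ≤ ∑ i, (u i - u (i + 1)) ^ 2 := sum_nonneg fun i _ => sq_nonneg _
  have h_shift := Equiv.sum_comp (Equiv.addRight 1) fun i => u i ^ 2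
  simp only [Equiv.coe_addRight] at h_shift
  simp only [cyclicForm, sub_sq, sum_add_distrib, sum_sub_distrib, mul_assoc, ← mul_sum,
    h_shift] at h_diff ⊢
  linarith

theorem cyclicForm_smul (c t : ℝ) (u : ZMod n → ℝ) :
    cyclicForm c (t • u) = t ^ 2 * cyclicForm c u := by
  simp only [cyclicForm, Pi.smul_apply, smul_eq_mul, mul_sum]
  exact sum_congr rfl fun i _ => by ring

end CyclicForm

namespace WVert

variable {n k : ℕ} [NeZero n]

def vSum (y : WVert n k → ℝ) (i : ZMod n) : ℝ := ∑ j, y (.inl (i, j))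

def wSum (y : WVert n k → ℝ) (i : ZMod n) : ℝ := ∑ j, y (.inr (i, j))

noncomputable def blockSums : (WVert n k → ℝ) →ₗ[ℝ] (ZMod n → ℝ) × (ZMod n → ℝ) where
  toFun y := (vSum y, wSum y)
  map_add' y z := by ext i <;> simp [vSum, wSum, sum_add_distrib]
  map_smul' c y := by ext i <;> simp [vSum, wSum, mul_sum]

theorem dotProduct_self_eq (y : WVert n k → ℝ) :
    y ⬝ᵥ y = ∑ i, ∑ j, y (.inl (i, j)) ^ 2 + ∑ i, ∑ j, y (.inr (i, j)) ^ 2 := by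
  simp only [dotProduct, ← sq, Fintype.sum_sum_type, Fintype.sum_prod_type]

theorem sum_sq_vSum_add_sum_sq_wSum_le (y : WVert n k → ℝ) :
    ∑ i, vSum y i ^ 2 + ∑ i, wSum y i ^ 2 ≤ k * (y ⬝ᵥ y) := by
  rw [dotProduct_self_eq, mul_add, mul_sum, mul_sum]
  refine add_le_add (sum_le_sum fun i _ => ?_) (sum_le_sum fun i _ => ?_)
  · simpa [vSum] using sq_sum_le_card_mul_sum_sq (s := univ) (f := fun j => y (.inl (i, j)))
  · simpa [wSum] using sq_sum_le_card_mul_sum_sq (s := univ) (f := fun j => y (.inr (i, j)))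

end WVert

open WVert

section W

variable {n k : ℕ}

@[simp]
theorem W_adj_inl_inr {p q : ZMod n × Fin k} :
    (W n k).Adj (.inl p) (.inr q) ↔ q.1 = p.1 ∨ (p.1 = q.1 + 1 ∧ p.2 = q.2) := Iff.rfl

@[simp]
theorem W_adj_inr_inl {p q : ZMod n × Fin k} :
    (W n k).Adj (.inr q) (.inl p) ↔ q.1 = p.1 ∨ (p.1 = q.1 + 1 ∧ p.2 = q.2) := Iff.rfl

@[simp]
theorem W_not_adj_inl_inl {p q : ZMod n × Fin k} : ¬(W n k).Adj (.inl p) (.inl q) := id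

@[simp]
theorem W_not_adj_inr_inr {p q : ZMod n × Fin k} : ¬(W n k).Adj (.inr p) (.inr q) := id

variable [NeZero n] [Nontrivial (ZMod n)]

theorem W_adjMatrix_mulVec_inl (y : WVert n k → ℝ) (i : ZMod n) (j : Fin k) :
    ((W n k).adjMatrix ℝ *ᵥ y) (.inl (i, j)) = wSum y i + y (.inr (i - 1, j)) := by
  have h_entry : ∀ q : ZMod n × Fin k, (W n k).adjMatrix ℝ (.inl (i, j)) (.inr q) * y (.inr q) =
      (if q.1 = i then y (.inr q) else 0) + (if q = (i - 1, j) then y (.inr q) else 0) := by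
    rintro ⟨i', l⟩
    by_cases h : i' = i
    · subst h
      simp [eq_sub_iff_add_eq]
    · simp [h, eq_sub_iff_add_eq, eq_comm]
  simp only [mulVec, dotProduct, Fintype.sum_sum_type, h_entry, sum_add_distrib,
    Fintype.sum_ite_eq']
  simp only [SimpleGraph.adjMatrix_apply, W_not_adj_inl_inl, if_false, zero_mul, sum_const_zero,
    zero_add]
  rw [Fintype.sum_prod_type, Fintype.sum_eq_single i fun i' h => by simp [h]]
  simp [wSum]

theorem W_adjMatrix_mulVec_inr (y : WVert n k → ℝ) (i : ZMod n) (j : Fin k) :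
    ((W n k).adjMatrix ℝ *ᵥ y) (.inr (i, j)) = vSum y i + y (.inl (i + 1, j)) := by
  have h_entry : ∀ q : ZMod n × Fin k, (W n k).adjMatrix ℝ (.inr (i, j)) (.inl q) * y (.inl q) =
      (if q.1 = i then y (.inl q) else 0) + (if q = (i + 1, j) then y (.inl q) else 0) := by
    rintro ⟨i', l⟩
    by_cases h : i' = i
    · subst h
      simp
    · simp [h, Ne.symm h]
  simp only [mulVec, dotProduct, Fintype.sum_sum_type, h_entry, sum_add_distrib,
    Fintype.sum_ite_eq']
  simp only [SimpleGraph.adjMatrix_apply, W_not_adj_inr_inr, if_false, zero_mul, sum_const_zero,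
    add_zero]
  rw [Fintype.sum_prod_type, Fintype.sum_eq_single i fun i' h => by simp [h]]
  simp [vSum]

theorem W_adjMatrix_mulVec_dotProduct_self (y : WVert n k → ℝ) :
    ((W n k).adjMatrix ℝ *ᵥ y) ⬝ᵥ ((W n k).adjMatrix ℝ *ᵥ y) =
      y ⬝ᵥ y + cyclicForm k (vSum y) + cyclicForm k (wSum y) := by
  have h_w : ∀ i, ∑ j : Fin k, (wSum y i + y (.inr (i - 1, j))) ^ 2 =
      k * wSum y i ^ 2 + 2 * (wSum y (i - 1) * wSum y (i - 1 + 1)) +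
        ∑ j, y (.inr (i - 1, j)) ^ 2 := by
    intro i
    rw [sum_sq_const_add, sub_add_cancel, Fintype.card_fin]
    simp only [wSum]
    ring
  have h_v : ∀ i, ∑ j : Fin k, (vSum y i + y (.inl (i + 1, j))) ^ 2 =
      k * vSum y i ^ 2 + 2 * (vSum y i * vSum y (i + 1)) + ∑ j, y (.inl (i + 1, j)) ^ 2 := by
    intro i
    rw [sum_sq_const_add, Fintype.card_fin]
    simp only [vSum]
    ring
  have h_add (f : ZMod n → ℝ) : ∑ i, f (i + 1) = ∑ i, f i := Equiv.sum_comp (Equiv.addRight 1) f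
  have h_sub (f : ZMod n → ℝ) : ∑ i, f (i - 1) = ∑ i, f i := Equiv.sum_comp (Equiv.subRight 1) f
  simp only [dotProduct, ← sq, Fintype.sum_sum_type, Fintype.sum_prod_type,
    W_adjMatrix_mulVec_inl, W_adjMatrix_mulVec_inr, h_w, h_v, sum_add_distrib, cyclicForm]
  rw [h_sub fun i => 2 * (wSum y i * wSum y (i + 1)), h_sub fun i => ∑ j, y (.inr (i, j)) ^ 2,
    h_add fun i => ∑ j, y (.inl (i, j)) ^ 2]
  ring

end W

section P

variable {n k : ℕ} [NeZero n]

theorem sum_notMem_PVert (g : WVert n k → ℝ) :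
    ∑ u : {w // w ∉ PVert n k}, g u = ∑ j, g (.inr (0, j)) := by
  refine (Fintype.sum_bijective
    (fun j => (⟨.inr (0, j), fun h => h j rfl⟩ : {w // w ∉ PVert n k})) ⟨?_, ?_⟩ _ _
    fun _ => rfl).symm
  · intro j j' h
    simpa using h
  · rintro ⟨w, hw⟩
    obtain ⟨j, rfl⟩ : ∃ j, w = .inr (0, j) := by simpa [PVert] using hw
    exact ⟨j, rfl⟩

theorem P_mulVec_dotProduct_self_add (x : PVert n k → ℝ) :
    ((P n k).adjMatrix ℝ *ᵥ x) ⬝ᵥ ((P n k).adjMatrix ℝ *ᵥ x) +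
        ∑ j, ((W n k).adjMatrix ℝ *ᵥ Function.extend Subtype.val x 0) (.inr (0, j)) ^ 2 =
      ((W n k).adjMatrix ℝ *ᵥ Function.extend Subtype.val x 0) ⬝ᵥ
        ((W n k).adjMatrix ℝ *ᵥ Function.extend Subtype.val x 0) := by
  set z := (W n k).adjMatrix ℝ *ᵥ Function.extend Subtype.val x 0
  have h_restrict : ∀ u, ((P n k).adjMatrix ℝ *ᵥ x) u = z u :=
    (W n k).adjMatrix_induce_mulVec_apply _ x
  simp only [dotProduct, h_restrict, ← sum_notMem_PVert fun w => z w ^ 2, ← sq]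
  exact Fintype.sum_subtype_add_sum_subtype (· ∈ PVert n k) fun w => z w ^ 2

variable [Nontrivial (ZMod n)]

theorem P_mulVec_dotProduct_self_le_sq_add_one_mul (x : PVert n k → ℝ) :
    ((P n k).adjMatrix ℝ *ᵥ x) ⬝ᵥ ((P n k).adjMatrix ℝ *ᵥ x) ≤ ((k : ℝ) + 1) ^ 2 * (x ⬝ᵥ x) := by
  set y := Function.extend Subtype.val x 0
  have h_split := P_mulVec_dotProduct_self_add x
  have h_deleted : 0 ≤ ∑ j, ((W n k).adjMatrix ℝ *ᵥ y) (.inr (0, j)) ^ 2 :=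
    sum_nonneg fun _ _ => sq_nonneg _
  have h_sums := mul_le_mul_of_nonneg_left (sum_sq_vSum_add_sum_sq_wSum_le y)
    (by positivity : (0 : ℝ) ≤ k + 2)
  rw [W_adjMatrix_mulVec_dotProduct_self] at h_split
  rw [← Function.extend_zero_dotProduct_self x]
  linarith [cyclicForm_le k (vSum y), cyclicForm_le k (wSum y)]

theorem dotProduct_self_le_P_mulVec_dotProduct_self (hk : 2 ≤ k) (x : PVert n k → ℝ)
    (hx : ∀ j, ((W n k).adjMatrix ℝ *ᵥ Function.extend Subtype.val x 0) (.inr (0, j)) = 0) :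
    x ⬝ᵥ x ≤ ((P n k).adjMatrix ℝ *ᵥ x) ⬝ᵥ ((P n k).adjMatrix ℝ *ᵥ x) := by
  have h_split := P_mulVec_dotProduct_self_add x
  have hk' : (2 : ℝ) ≤ k := by exact_mod_cast hk
  simp only [hx, sq, mul_zero, sum_const_zero, add_zero, W_adjMatrix_mulVec_dotProduct_self]
    at h_split
  rw [← Function.extend_zero_dotProduct_self x]
  linarith [cyclicForm_nonneg hk' (vSum (Function.extend Subtype.val x 0)),
    cyclicForm_nonneg hk' (wSum (Function.extend Subtype.val x 0))]

theorem P_mulVec_dotProduct_self_le_dotProduct_self (x : PVert n k → ℝ)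
    (hv : vSum (Function.extend Subtype.val x 0) = 0)
    (hw : wSum (Function.extend Subtype.val x 0) = 0) :
    ((P n k).adjMatrix ℝ *ᵥ x) ⬝ᵥ ((P n k).adjMatrix ℝ *ᵥ x) ≤ x ⬝ᵥ x := by
  have h_split := P_mulVec_dotProduct_self_add x
  have h_deleted : 0 ≤ ∑ j, ((W n k).adjMatrix ℝ *ᵥ Function.extend Subtype.val x 0)
      (.inr (0, j)) ^ 2 := sum_nonneg fun _ _ => sq_nonneg _
  have h_zero : cyclicForm (k : ℝ) (0 : ZMod n → ℝ) = 0 := by simp [cyclicForm]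
  rw [W_adjMatrix_mulVec_dotProduct_self, hv, hw, h_zero, Function.extend_zero_dotProduct_self]
    at h_split
  linarith

theorem sq_sub_one_mul_le_P_mulVec_dotProduct_self (a b : ZMod n → ℝ) (ha : a 0 = 0)
    (x : PVert n k → ℝ)
    (hx : Function.extend Subtype.val x 0 = Sum.elim (a ∘ Prod.fst) (b ∘ Prod.fst)) :
    ((k : ℝ) - 1) ^ 2 * (x ⬝ᵥ x) ≤ ((P n k).adjMatrix ℝ *ᵥ x) ⬝ᵥ ((P n k).adjMatrix ℝ *ᵥ x) := by
  have h_split := P_mulVec_dotProduct_self_add x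
  have h_norm : x ⬝ᵥ x = k * (∑ i, a i ^ 2 + ∑ i, b i ^ 2) := by
    rw [← Function.extend_zero_dotProduct_self x, hx, dotProduct_self_eq]
    simp [mul_add, mul_sum]
  have hv : vSum (Function.extend Subtype.val x 0) = (k : ℝ) • a := by
    ext i
    simp [vSum, hx]
  have hw : wSum (Function.extend Subtype.val x 0) = (k : ℝ) • b := by
    ext i
    simp [wSum, hx]
  have h_deleted :
      ∑ j, ((W n k).adjMatrix ℝ *ᵥ Function.extend Subtype.val x 0) (.inr (0, j)) ^ 2 =
        k * a 1 ^ 2 := by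
    simp only [W_adjMatrix_mulVec_inr, hv]
    simp [hx, ha]
  rw [W_adjMatrix_mulVec_dotProduct_self, hv, hw, cyclicForm_smul, cyclicForm_smul, cyclicForm_eq,
    cyclicForm_eq, h_deleted, Function.extend_zero_dotProduct_self, h_norm] at h_split
  have h_a : a 1 ^ 2 ≤ ∑ i, (a i + a (i + 1)) ^ 2 := by
    simpa [ha] using single_le_sum (fun i _ => sq_nonneg (a i + a (i + 1))) (mem_univ 0)
  have h_b : 0 ≤ ∑ i, (b i + b (i + 1)) ^ 2 := sum_nonneg fun _ _ => sq_nonneg _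
  have hk : (k : ℝ) ≤ k ^ 2 := by exact_mod_cast Nat.le_self_pow two_ne_zero k
  rw [h_norm]
  nlinarith [mul_le_mul_of_nonneg_right hk (sq_nonneg (a 1)),
    mul_le_mul_of_nonneg_left h_a (sq_nonneg (k : ℝ)), mul_nonneg (sq_nonneg (k : ℝ)) h_b]

end P

section Count

variable {n k : ℕ} [NeZero n] [Nontrivial (ZMod n)] (hA : ((P n k).adjMatrix ℝ).IsHermitian)

theorem sq_eigenvalues_le_sq_add_one (i : PVert n k) :
    hA.eigenvalues i ^ 2 ≤ ((k : ℝ) + 1) ^ 2 :=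
  hA.sq_eigenvalues_le_of_forall _ P_mulVec_dotProduct_self_le_sq_add_one_mul i

theorem card_sq_eigenvalues_lt_one_le (hk : 2 ≤ k) : #{i | hA.eigenvalues i ^ 2 < 1} ≤ k := by
  let L : (PVert n k → ℝ) →ₗ[ℝ] Fin k → ℝ :=
    LinearMap.funLeft ℝ ℝ (fun j => (.inr (0, j) : WVert n k)) ∘ₗ
      ((W n k).adjMatrix ℝ).mulVecLin ∘ₗ Function.ExtendByZero.linearMap ℝ Subtype.val
  have h_ker : finrank ℝ (LinearMap.ker L) ≤ #{i | 1 ≤ hA.eigenvalues i ^ 2} :=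
    hA.finrank_le_card_le_sq_eigenvalues 1 _ fun x hx => by
      rw [one_mul]
      exact dotProduct_self_le_P_mulVec_dotProduct_self hk x (congrFun (LinearMap.mem_ker.1 hx))
  have h_range : finrank ℝ (LinearMap.range L) ≤ k := (Submodule.finrank_le _).trans (by simp)
  have h_rank := L.finrank_range_add_finrank_ker
  have h_card := card_filter_add_card_filter_not (s := univ) fun i => 1 ≤ hA.eigenvalues i ^ 2
  simp only [not_le, finrank_fintype_fun_eq_card, card_univ] at h_rank h_card
  omega

theorem card_PVert_le_card_sq_eigenvalues_le_one_add :
    Fintype.card (PVert n k) ≤ #{i | hA.eigenvalues i ^ 2 ≤ 1} + 2 * n := by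
  let L : (PVert n k → ℝ) →ₗ[ℝ] (ZMod n → ℝ) × (ZMod n → ℝ) :=
    blockSums ∘ₗ Function.ExtendByZero.linearMap ℝ Subtype.val
  have h_ker : finrank ℝ (LinearMap.ker L) ≤ #{i | hA.eigenvalues i ^ 2 ≤ 1} :=
    hA.finrank_le_card_sq_eigenvalues_le 1 _ fun x hx => by
      rw [one_mul]
      have h0 : (vSum _, wSum _) = (0, 0) := LinearMap.mem_ker.1 hx
      exact P_mulVec_dotProduct_self_le_dotProduct_self x (Prod.ext_iff.1 h0).1
        (Prod.ext_iff.1 h0).2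
  have h_range : finrank ℝ (LinearMap.range L) ≤ 2 * n :=
    (Submodule.finrank_le _).trans (by simp [two_mul])
  have h_rank := L.finrank_range_add_finrank_ker
  rw [finrank_fintype_fun_eq_card] at h_rank
  omega

theorem two_mul_le_card_sq_eigenvalues_ge_add_two (hk : 1 ≤ k) :
    2 * n ≤ #{i | ((k : ℝ) - 1) ^ 2 ≤ hA.eigenvalues i ^ 2} + 2 := by
  -- `inl i` and `inr i` index the blocks `v_{i,·}` and `w_{i,·}`.
  let B := {c : ZMod n ⊕ ZMod n // c ∉ ({.inl 0, .inr 0} : Finset (ZMod n ⊕ ZMod n))}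
  let F : (B → ℝ) →ₗ[ℝ] PVert n k → ℝ :=
    LinearMap.funLeft ℝ ℝ Subtype.val ∘ₗ LinearMap.funLeft ℝ ℝ (Sum.map Prod.fst Prod.fst) ∘ₗ
      Function.ExtendByZero.linearMap ℝ Subtype.val
  have hF : Function.Injective F := by
    rw [← LinearMap.ker_eq_bot, LinearMap.ker_eq_bot']
    intro c hc
    ext ⟨s, hs⟩
    obtain ⟨u, rfl⟩ : ∃ u : PVert n k, Sum.map Prod.fst Prod.fst u.1 = s := by
      rcases s with i | i
      · exact ⟨⟨.inl (i, ⟨0, hk⟩), by simp [PVert]⟩, rfl⟩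
      · exact ⟨⟨.inr (i, ⟨0, hk⟩), by simpa [PVert] using hs⟩, rfl⟩
    have h := congrFun hc u
    change Function.extend Subtype.val c 0 ((⟨_, hs⟩ : B) : ZMod n ⊕ ZMod n) = 0 at h
    rwa [Subtype.val_injective.extend_apply] at h
  have h_range : finrank ℝ (LinearMap.range F) ≤
      #{i | ((k : ℝ) - 1) ^ 2 ≤ hA.eigenvalues i ^ 2} := by
    refine hA.finrank_le_card_le_sq_eigenvalues _ _ ?_
    rintro _ ⟨c, rfl⟩
    set e := Function.extend Subtype.val c 0
    have h_excluded : ∀ s ∈ ({.inl 0, .inr 0} : Finset (ZMod n ⊕ ZMod n)), e s = 0 :=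
      fun s hs => Function.extend_apply' _ _ _ fun ⟨t, ht⟩ => t.2 (ht ▸ hs)
    have hx : Function.extend Subtype.val (F c) 0 =
        Sum.elim ((e ∘ .inl) ∘ Prod.fst) ((e ∘ .inr) ∘ Prod.fst) := by
      rw [show F c = (e ∘ Sum.map Prod.fst Prod.fst) ∘ Subtype.val from rfl,
        Function.extend_val_comp_val]
      · ext (_ | _) <;> rfl
      · intro v hv
        obtain ⟨j, rfl⟩ : ∃ j, v = .inr (0, j) := by simpa [PVert] using hv
        exact h_excluded _ (by simp)
    exact sq_sub_one_mul_le_P_mulVec_dotProduct_self _ _ (h_excluded _ (by simp)) _ hx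
  have h_card : Fintype.card B = 2 * n - 2 := by
    rw [Fintype.card_subtype_compl, Fintype.card_coe, card_pair Sum.inl_ne_inr, Fintype.card_sum,
      ZMod.card, two_mul]
  rw [LinearMap.finrank_range_of_inj hF, finrank_fintype_fun_eq_card, h_card] at h_range
  omega

theorem card_sq_eigenvalues_mem_Ioo_le_two (hk : 2 ≤ k) :
    #{i | 1 < hA.eigenvalues i ^ 2 ∧ hA.eigenvalues i ^ 2 < ((k : ℝ) - 1) ^ 2} ≤ 2 := by
  rcases hk.eq_or_lt with rfl | hk
  · refine (card_eq_zero.2 (filter_eq_empty_iff.2 fun i _ h => ?_)).trans_le (Nat.zero_le 2)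
    norm_num at h
    linarith [h.1, h.2]
  have h_gap : (1 : ℝ) < ((k : ℝ) - 1) ^ 2 := by
    have : (3 : ℝ) ≤ k := by exact_mod_cast hk
    nlinarith
  have h_low := card_PVert_le_card_sq_eigenvalues_le_one_add hA
  have h_high := two_mul_le_card_sq_eigenvalues_ge_add_two hA (by omega)
  have h_total := card_le_add_card_Ioo_add_card_ge_le_card (fun i => hA.eigenvalues i ^ 2) h_gap
  omega

end Count

/-- At most `3k` of the eigenvalues of `P_{n,k}` (counted with multiplicity, i.e. as
roots of the characteristic polynomial of its adjacency matrix) lie outside the set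
`{−1, 1} ∪ [k−1, k+1] ∪ [−k−1, −k+1]`. -/
theorem P_few_exceptional_eigenvalues (n k : ℕ) [NeZero n] (hn : 2 ≤ n) (hk : 2 ≤ k) :
    Multiset.card
      (((P n k).adjMatrix ℝ).charpoly.roots.filter
        (fun μ => μ ∉ ({-1, 1} ∪ Set.Icc ((k : ℝ) - 1) ((k : ℝ) + 1) ∪
          Set.Icc (-(k : ℝ) - 1) (-(k : ℝ) + 1) : Set ℝ))) ≤ 3 * k := by
  have : Nontrivial (ZMod n) := ZMod.nontrivial_iff.2 (by omega)
  have hA := (P n k).isHermitian_adjMatrix ℝ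
  rw [hA.roots_charpoly_eq_eigenvalues, Multiset.filter_map, Multiset.card_map]
  change #(univ.filter _) ≤ 3 * k
  calc #(univ.filter _)
      ≤ #(({i | hA.eigenvalues i ^ 2 < 1} : Finset (PVert n k)) ∪
          ({i | 1 < hA.eigenvalues i ^ 2 ∧ hA.eigenvalues i ^ 2 < ((k : ℝ) - 1) ^ 2} :
            Finset (PVert n k))) :=
        card_le_card fun i hi => by
          simp only [mem_filter, Function.comp_apply, RCLike.ofReal_real_eq_id, id] at hi
          simpa using sq_lt_one_or_mem_Ioo_of_notMem (by exact_mod_cast hk.trans' one_le_two)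
            (sq_eigenvalues_le_sq_add_one hA i) hi.2
    _ ≤ k + 2 := (card_union_le _ _).trans <|
        add_le_add (card_sq_eigenvalues_lt_one_le hA hk) (card_sq_eigenvalues_mem_Ioo_le_two hA hk)
    _ ≤ 3 * k := by omega
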